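/- In a uniformly random Dyck path of length 2m with a uniformly random marked up-step x from height 0 to height 1, let y be the first subsequent down-step from height 1 to height 0, let a be the length of the prefix before x and b the number of steps strictly between x and y. Then P(a < b) = P(a > b); i.e., swapping the two subpaths is a measure-preserving involution exchanging the events {a < b} and {a > b}. -/
import Mathlib


/-- Height of the path after the first `k` steps (`true` = up-step `+1`,
`false` = down-step `-1`). -/
def pathSum {n : ℕ} (v : Fin n → Bool) (k : ℕ) : ℤ :=
  ∑ i ∈ Finset.univ.filter (fun i : Fin n => (i : ℕ) < k), (if v i then (1:ℤ) else -1)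

/-- A Dyck path: ends at `0` and stays nonnegative. -/
def IsDyck {n : ℕ} (v : Fin n → Bool) : Prop :=
  pathSum v n = 0 ∧ ∀ k, k ≤ n → 0 ≤ pathSum v k

open Classical in
/-- The finite set of all Dyck paths of length `n`. -/
noncomputable def dyckSet (n : ℕ) : Finset (Fin n → Bool) :=
  Finset.univ.filter fun v => IsDyck v

/-- Number of visits to `0` (including the initial and final point). -/
def visits {n : ℕ} (v : Fin n → Bool) : ℕ :=
  ((Finset.range (n + 1)).filter fun k => pathSum v k = 0).card

open Classical in
/-- Dyck paths of length `2m` together with a marked up-step starting at height `0`. -/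
noncomputable def marked (m : ℕ) : Finset ((Fin (2*m) → Bool) × Fin (2*m)) :=
  Finset.univ.filter fun q => IsDyck q.1 ∧ pathSum q.1 (q.2 : ℕ) = 0 ∧ q.1 q.2 = true

/-- Number of steps strictly between the marked up-step `i` and the first
subsequent step returning to height `0`. -/
noncomputable def bgap {n : ℕ} (v : Fin n → Bool) (i : ℕ) : ℕ :=
  sInf {k : ℕ | i < k ∧ pathSum v (k + 1) = 0} - i - 1


/-! ### Auxiliary development -/

def vget {n : ℕ} (v : Fin n → Bool) (t : ℕ) : Bool :=
  if h : t < n then v ⟨t, h⟩ else false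

lemma pathSum_zero {n : ℕ} (v : Fin n → Bool) : pathSum v 0 = 0 := by
  simp [pathSum]

lemma pathSum_succ {n : ℕ} (v : Fin n → Bool) (k : ℕ) (hk : k < n) :
    pathSum v (k+1) = pathSum v k + (if vget v k then 1 else -1) := by
  have h : Finset.univ.filter (fun i : Fin n => (i : ℕ) < k + 1)
      = insert ⟨k, hk⟩ (Finset.univ.filter (fun i : Fin n => (i : ℕ) < k)) := by
    ext i
    simp only [Finset.mem_filter, Finset.mem_univ, true_and, Finset.mem_insert, Fin.ext_iff]
    omega
  rw [pathSum, h, Finset.sum_insert (by simp), vget, dif_pos hk]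
  simp [pathSum, add_comm]

lemma pathSum_of_ge {n : ℕ} (v : Fin n → Bool) (k : ℕ) (hk : n ≤ k) :
    pathSum v k = pathSum v n := by
  unfold pathSum
  congr 1
  ext i
  simp only [Finset.mem_filter, Finset.mem_univ, true_and]
  exact ⟨fun _ => i.isLt, fun _ => lt_of_lt_of_le i.isLt hk⟩

lemma pathSum_nonneg {n : ℕ} {v : Fin n → Bool} (hD : IsDyck v) (k : ℕ) :
    0 ≤ pathSum v k := by
  rcases le_or_gt n k with h | h
  · rw [pathSum_of_ge v k h]; exact hD.2 n le_rfl
  · exact hD.2 k h.le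

noncomputable def retIdx {n : ℕ} (v : Fin n → Bool) (i : ℕ) : ℕ :=
  sInf {k : ℕ | i < k ∧ pathSum v (k + 1) = 0}

lemma bgap_eq {n : ℕ} (v : Fin n → Bool) (i : ℕ) :
    bgap v i = retIdx v i - i - 1 := rfl

section
variable {n : ℕ} {v : Fin n → Bool} {i : ℕ}
  (hD : IsDyck v) (hi : i < n) (h0 : pathSum v i = 0) (ht : vget v i = true)

include hD hi h0 ht

lemma ret_mem_aux : (n - 1) ∈ {k : ℕ | i < k ∧ pathSum v (k + 1) = 0} := by
  have hn1 : 1 ≤ n := by omega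
  have hfin : pathSum v n = 0 := hD.1
  constructor
  · by_contra h
    have hie : i = n - 1 := by omega
    have : pathSum v n = pathSum v (i+1) := by congr 1; omega
    rw [this, pathSum_succ v i hi, h0, ht] at hfin
    simp at hfin
  · have : n - 1 + 1 = n := by omega
    rw [this]; exact hfin

lemma ret_lt : i < retIdx v i ∧ retIdx v i < n ∧ pathSum v (retIdx v i + 1) = 0 := by
  unfold retIdx
  have hne : {k : ℕ | i < k ∧ pathSum v (k + 1) = 0}.Nonempty :=
    ⟨n - 1, ret_mem_aux hD hi h0 ht⟩
  have hmem := Nat.sInf_mem hne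
  have hle := Nat.sInf_le (ret_mem_aux hD hi h0 ht)
  exact ⟨hmem.1, by omega, hmem.2⟩

omit hD hi h0 ht in
lemma ret_min {k : ℕ} (h1 : i < k) (h2 : pathSum v (k+1) = 0) : retIdx v i ≤ k :=
  Nat.sInf_le ⟨h1, h2⟩

lemma mid_pos {t : ℕ} (h1 : i < t) (h2 : t ≤ retIdx v i) : 1 ≤ pathSum v t := by
  have hnn : 0 ≤ pathSum v t := pathSum_nonneg hD t
  rcases Nat.exists_eq_add_of_lt h1 with ⟨s, hs⟩
  by_contra h
  have hz : pathSum v t = 0 := by omega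
  rcases Nat.lt_or_ge i (t - 1) with hc | hc
  · have : t - 1 + 1 = t := by omega
    have := ret_min (v := v) hc (by rw [this]; exact hz)
    omega
  · have hti : t = i + 1 := by omega
    rw [hti, pathSum_succ v i hi, h0, ht] at hz
    simp at hz

lemma ret_height : pathSum v (retIdx v i) = 1 ∧ vget v (retIdx v i) = false := by
  obtain ⟨h1, h2, h3⟩ := ret_lt hD hi h0 ht
  have hp := mid_pos hD hi h0 ht h1 le_rfl
  rw [pathSum_succ v _ h2] at h3
  cases hb : vget v (retIdx v i) with
  | true => exfalso; rw [hb] at h3; simp at h3; omega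
  | false => rw [hb] at h3; simp at h3; exact ⟨by omega, rfl⟩

end

noncomputable def swapPath {n : ℕ} (v : Fin n → Bool) (i j : ℕ) : Fin n → Bool :=
  fun k =>
    if (k : ℕ) < j - i - 1 then vget v (i + 1 + (k : ℕ))
    else if (k : ℕ) = j - i - 1 then true
    else if (k : ℕ) < j then vget v ((k : ℕ) - (j - i - 1) - 1)
    else v k

lemma vget_fin {n : ℕ} (v : Fin n → Bool) (k : Fin n) : vget v (k : ℕ) = v k := by
  rw [vget, dif_pos k.isLt]

lemma vget_swap {n : ℕ} (v : Fin n → Bool) (i j t : ℕ) (h : t < n) :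
    vget (swapPath v i j) t =
      if t < j - i - 1 then vget v (i + 1 + t)
      else if t = j - i - 1 then true
      else if t < j then vget v (t - (j - i - 1) - 1)
      else vget v t := by
  rw [vget, dif_pos h, swapPath]
  simp only []
  split_ifs with h1 h2 h3 <;> try rfl
  rw [vget, dif_pos h]

section
variable {n : ℕ} {v : Fin n → Bool} {i : ℕ}
  (hD : IsDyck v) (hi : i < n) (h0 : pathSum v i = 0) (ht : vget v i = true)

include hD hi h0 ht

lemma sw1 : ∀ k, k ≤ retIdx v i - i - 1 →
    pathSum (swapPath v i (retIdx v i)) k = pathSum v (i + 1 + k) - 1 := by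
  obtain ⟨hiJ, hJn, hJ0⟩ := ret_lt hD hi h0 ht
  intro k
  induction k with
  | zero =>
      intro _
      rw [pathSum_zero, Nat.add_zero, pathSum_succ v i hi, h0, ht]
      simp
  | succ k IH =>
      intro hk
      have hkb : k < retIdx v i - i - 1 := by omega
      have hkn : k < n := by omega
      rw [pathSum_succ _ k hkn, IH (by omega)]
      rw [vget_swap v i (retIdx v i) k hkn, if_pos hkb]
      have h2 : i + 1 + (k + 1) = (i + 1 + k) + 1 := by ring
      rw [h2, pathSum_succ v (i + 1 + k) (by omega)]
      ring

lemma sw2 : ∀ k, retIdx v i - i - 1 < k → k ≤ retIdx v i →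
    pathSum (swapPath v i (retIdx v i)) k
      = 1 + pathSum v (k - (retIdx v i - i - 1) - 1) := by
  obtain ⟨hiJ, hJn, hJ0⟩ := ret_lt hD hi h0 ht
  have hJ1 := (ret_height hD hi h0 ht).1
  intro k
  induction k with
  | zero => omega
  | succ k IH =>
      intro hk1 hk2
      rcases Nat.lt_or_ge (retIdx v i - i - 1) k with h | h
      · have hkn : k < n := by omega
        rw [pathSum_succ _ k hkn, IH (by omega) (by omega)]
        rw [vget_swap v i (retIdx v i) k hkn,
          if_neg (show ¬ k < retIdx v i - i - 1 by omega),
          if_neg (show ¬ k = retIdx v i - i - 1 by omega),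
          if_pos (show k < retIdx v i by omega)]
        have h2 : k + 1 - (retIdx v i - i - 1) - 1 = (k - (retIdx v i - i - 1) - 1) + 1 := by
          omega
        rw [h2, pathSum_succ v _ (by omega)]
        ring
      · have hkb : k = retIdx v i - i - 1 := by omega
        have hkn : k < n := by omega
        rw [pathSum_succ _ k hkn, sw1 hD hi h0 ht k (le_of_eq hkb)]
        rw [vget_swap v i (retIdx v i) k hkn,
          if_neg (show ¬ k < retIdx v i - i - 1 by omega), if_pos hkb]
        have h2 : i + 1 + k = retIdx v i := by omega
        have h3 : k + 1 - (retIdx v i - i - 1) - 1 = 0 := by omega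
        rw [h2, hJ1, h3, pathSum_zero]
        simp

lemma sw3 : ∀ k, retIdx v i < k → pathSum (swapPath v i (retIdx v i)) k = pathSum v k := by
  obtain ⟨hiJ, hJn, hJ0⟩ := ret_lt hD hi h0 ht
  have hJ2 := (ret_height hD hi h0 ht).2
  intro k
  induction k with
  | zero => omega
  | succ k IH =>
      intro hk
      rcases Nat.lt_or_ge (retIdx v i) k with h | h
      · rcases Nat.lt_or_ge k n with hkn | hkn
        · rw [pathSum_succ _ k hkn, IH h, pathSum_succ v k hkn]
          rw [vget_swap v i (retIdx v i) k hkn,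
            if_neg (show ¬ k < retIdx v i - i - 1 by omega),
            if_neg (show ¬ k = retIdx v i - i - 1 by omega),
            if_neg (show ¬ k < retIdx v i by omega)]
        · rw [pathSum_of_ge _ (k+1) (by omega), pathSum_of_ge v (k+1) (by omega),
            ← pathSum_of_ge _ k hkn, ← pathSum_of_ge v k hkn]
          exact IH h
      · have hkJ : k = retIdx v i := by omega
        have hkn : k < n := by omega
        rw [pathSum_succ _ k hkn, sw2 hD hi h0 ht k (by omega) (le_of_eq hkJ)]
        rw [vget_swap v i (retIdx v i) k hkn,
          if_neg (show ¬ k < retIdx v i - i - 1 by omega),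
          if_neg (show ¬ k = retIdx v i - i - 1 by omega),
          if_neg (show ¬ k < retIdx v i by omega)]
        have hJ2' : vget v k = false := by rw [hkJ]; exact hJ2
        rw [hJ2']
        have h2 : k - (retIdx v i - i - 1) - 1 = i := by omega
        rw [h2, h0]
        have h4 : k + 1 = retIdx v i + 1 := by omega
        rw [h4, hJ0]
        simp

end

section
variable {n : ℕ} {v : Fin n → Bool} {i : ℕ}
  (hD : IsDyck v) (hi : i < n) (h0 : pathSum v i = 0) (ht : vget v i = true)

include hD hi h0 ht

lemma swap_dyck : IsDyck (swapPath v i (retIdx v i)) := by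
  obtain ⟨hiJ, hJn, hJ0⟩ := ret_lt hD hi h0 ht
  constructor
  · rw [sw3 hD hi h0 ht n hJn]; exact hD.1
  · intro k _
    rcases Nat.lt_or_ge (retIdx v i) k with h | h
    · rw [sw3 hD hi h0 ht k h]; exact pathSum_nonneg hD k
    · rcases Nat.lt_or_ge (retIdx v i - i - 1) k with h2 | h2
      · rw [sw2 hD hi h0 ht k h2 h]
        have := pathSum_nonneg hD (k - (retIdx v i - i - 1) - 1)
        omega
      · rw [sw1 hD hi h0 ht k h2]
        have := mid_pos hD hi h0 ht (show i < i + 1 + k by omega)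
          (show i + 1 + k ≤ retIdx v i by omega)
        omega

lemma swap_mark0 : pathSum (swapPath v i (retIdx v i)) (retIdx v i - i - 1) = 0 := by
  obtain ⟨hiJ, hJn, hJ0⟩ := ret_lt hD hi h0 ht
  have hJ1 := (ret_height hD hi h0 ht).1
  rw [sw1 hD hi h0 ht _ le_rfl]
  have h2 : i + 1 + (retIdx v i - i - 1) = retIdx v i := by omega
  rw [h2, hJ1]
  ring

lemma swap_markt : vget (swapPath v i (retIdx v i)) (retIdx v i - i - 1) = true := by
  obtain ⟨hiJ, hJn, hJ0⟩ := ret_lt hD hi h0 ht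
  rw [vget_swap v i (retIdx v i) _ (by omega), if_neg (lt_irrefl _), if_pos rfl]

lemma swap_ret : retIdx (swapPath v i (retIdx v i)) (retIdx v i - i - 1) = retIdx v i := by
  obtain ⟨hiJ, hJn, hJ0⟩ := ret_lt hD hi h0 ht
  have hmem : retIdx v i ∈ {k : ℕ | retIdx v i - i - 1 < k ∧
      pathSum (swapPath v i (retIdx v i)) (k + 1) = 0} := by
    constructor
    · omega
    · rw [sw3 hD hi h0 ht _ (by omega)]; exact hJ0
  apply le_antisymm
  · exact Nat.sInf_le hmem
  · apply le_csInf ⟨_, hmem⟩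
    intro s hs
    obtain ⟨hs1, hs2⟩ := hs
    by_contra hcon
    push_neg at hcon
    rw [sw2 hD hi h0 ht (s+1) (by omega) (by omega)] at hs2
    have := pathSum_nonneg hD (s + 1 - (retIdx v i - i - 1) - 1)
    omega

lemma swap_invol : swapPath (swapPath v i (retIdx v i)) (retIdx v i - i - 1) (retIdx v i) = v := by
  obtain ⟨hiJ, hJn, hJ0⟩ := ret_lt hD hi h0 ht
  funext k
  have hkn : (k : ℕ) < n := k.isLt
  have hib : retIdx v i - (retIdx v i - i - 1) - 1 = i := by omega
  rw [swapPath]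
  simp only [hib]
  rcases Nat.lt_or_ge (k : ℕ) i with h1 | h1
  · rw [if_pos h1]
    have hlt : retIdx v i - i - 1 + 1 + (k : ℕ) < n := by omega
    rw [vget_swap v i (retIdx v i) _ hlt,
      if_neg (show ¬ retIdx v i - i - 1 + 1 + (k:ℕ) < retIdx v i - i - 1 by omega),
      if_neg (show ¬ retIdx v i - i - 1 + 1 + (k:ℕ) = retIdx v i - i - 1 by omega),
      if_pos (show retIdx v i - i - 1 + 1 + (k:ℕ) < retIdx v i by omega)]
    have h2 : retIdx v i - i - 1 + 1 + (k:ℕ) - (retIdx v i - i - 1) - 1 = (k:ℕ) := by omega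
    rw [h2, vget_fin]
  · rw [if_neg (by omega)]
    rcases Nat.eq_or_lt_of_le h1 with h2 | h2
    · rw [if_pos h2.symm]
      have : v k = vget v i := by rw [h2, vget_fin]
      rw [this, ht]
    · rw [if_neg (by omega)]
      rcases Nat.lt_or_ge (k : ℕ) (retIdx v i) with h3 | h3
      · rw [if_pos h3]
        have hlt : (k : ℕ) - i - 1 < n := by omega
        rw [vget_swap v i (retIdx v i) _ hlt,
          if_pos (show (k:ℕ) - i - 1 < retIdx v i - i - 1 by omega)]
        have h4 : i + 1 + ((k:ℕ) - i - 1) = (k:ℕ) := by omega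
        rw [h4, vget_fin]
      · rw [if_neg (by omega)]
        have : swapPath v i (retIdx v i) k = vget (swapPath v i (retIdx v i)) (k : ℕ) :=
          (vget_fin _ k).symm
        rw [this, vget_swap v i (retIdx v i) _ hkn,
          if_neg (show ¬ (k:ℕ) < retIdx v i - i - 1 by omega),
          if_neg (show ¬ (k:ℕ) = retIdx v i - i - 1 by omega),
          if_neg (show ¬ (k:ℕ) < retIdx v i by omega), vget_fin]

end

open Classical in
lemma marked_mem {m : ℕ} (q : (Fin (2*m) → Bool) × Fin (2*m)) :
    q ∈ marked m ↔ IsDyck q.1 ∧ pathSum q.1 (q.2 : ℕ) = 0 ∧ q.1 q.2 = true := by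
  constructor
  · intro h; exact (Finset.mem_filter.1 h).2
  · intro h; exact Finset.mem_filter.2 ⟨Finset.mem_univ q, h⟩

noncomputable def swapFun (m : ℕ) (q : (Fin (2*m) → Bool) × Fin (2*m)) :
    (Fin (2*m) → Bool) × Fin (2*m) :=
  (swapPath q.1 (q.2 : ℕ) (retIdx q.1 (q.2 : ℕ)),
   if h : retIdx q.1 (q.2 : ℕ) - (q.2 : ℕ) - 1 < 2*m
   then ⟨retIdx q.1 (q.2 : ℕ) - (q.2 : ℕ) - 1, h⟩ else q.2)

lemma swapFun_props {m : ℕ} {q : (Fin (2*m) → Bool) × Fin (2*m)} (hq : q ∈ marked m) :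
    swapFun m q ∈ marked m ∧ ((swapFun m q).2 : ℕ) = bgap q.1 (q.2 : ℕ) ∧
      bgap (swapFun m q).1 ((swapFun m q).2 : ℕ) = (q.2 : ℕ) ∧
      swapFun m (swapFun m q) = q := by
  obtain ⟨hD, h0, htf⟩ := (marked_mem q).1 hq
  have hi : (q.2 : ℕ) < 2*m := q.2.isLt
  have ht : vget q.1 (q.2 : ℕ) = true := by rw [vget_fin]; exact htf
  obtain ⟨hiJ, hJn, hJ0⟩ := ret_lt hD hi h0 ht
  have hb : retIdx q.1 (q.2:ℕ) - (q.2:ℕ) - 1 < 2*m := by omega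
  have hsnd : (swapFun m q).2
      = (⟨retIdx q.1 (q.2:ℕ) - (q.2:ℕ) - 1, hb⟩ : Fin (2*m)) := by
    simp only [swapFun, dif_pos hb]
  have hfst : (swapFun m q).1 = swapPath q.1 (q.2:ℕ) (retIdx q.1 (q.2:ℕ)) := rfl
  have hvalsnd : ((swapFun m q).2 : ℕ) = retIdx q.1 (q.2:ℕ) - (q.2:ℕ) - 1 := by
    rw [hsnd]
  -- membership
  have hDw := swap_dyck hD hi h0 ht
  have h0w := swap_mark0 hD hi h0 ht
  have htw := swap_markt hD hi h0 ht
  have hretw := swap_ret hD hi h0 ht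
  have hmem : swapFun m q ∈ marked m := by
    rw [marked_mem]
    refine ⟨hDw, ?_, ?_⟩
    · rw [hvalsnd, hfst]; exact h0w
    · rw [hfst, hsnd]
      have hvf := vget_fin (swapPath q.1 (↑q.2) (retIdx q.1 ↑q.2))
        (⟨retIdx q.1 ↑q.2 - ↑q.2 - 1, hb⟩ : Fin (2*m))
      rw [← hvf]
      exact htw
  have hval : ((swapFun m q).2 : ℕ) = bgap q.1 (q.2 : ℕ) := by
    rw [hvalsnd, bgap_eq]
  have hbg : bgap (swapFun m q).1 ((swapFun m q).2 : ℕ) = (q.2 : ℕ) := by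
    rw [hfst, hvalsnd, bgap_eq, hretw]
    omega
  refine ⟨hmem, hval, hbg, ?_⟩
  have hret2 : retIdx (swapFun m q).1 ((swapFun m q).2 : ℕ) = retIdx q.1 (q.2:ℕ) := by
    rw [hfst, hvalsnd]; exact hretw
  have hval2 : retIdx (swapFun m q).1 ((swapFun m q).2:ℕ) - ((swapFun m q).2:ℕ) - 1
      = (q.2 : ℕ) := by
    rw [hret2, hvalsnd]; omega
  apply Prod.ext
  · show swapPath (swapFun m q).1 ((swapFun m q).2 : ℕ)
      (retIdx (swapFun m q).1 ((swapFun m q).2 : ℕ)) = q.1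
    rw [hret2, hfst, hvalsnd]
    exact swap_invol hD hi h0 ht
  · show (if h : retIdx (swapFun m q).1 ((swapFun m q).2 : ℕ) - ((swapFun m q).2 : ℕ) - 1 < 2*m
      then (⟨_, h⟩ : Fin (2*m)) else (swapFun m q).2) = q.2
    rw [dif_pos (by rw [hval2]; exact hi)]
    exact Fin.ext hval2

open Classical in
theorem stmt_17 (m : ℕ) (hm : 1 ≤ m) :
    ((marked m).filter fun q => (q.2 : ℕ) < bgap q.1 (q.2 : ℕ)).card
      = ((marked m).filter fun q => bgap q.1 (q.2 : ℕ) < (q.2 : ℕ)).card := by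
  apply Finset.card_bij' (fun q _ => swapFun m q) (fun q _ => swapFun m q)
  · intro q hq
    rw [Finset.mem_filter] at hq ⊢
    obtain ⟨hqm, hlt⟩ := hq
    obtain ⟨hmem, hval, hbg, _⟩ := swapFun_props hqm
    exact ⟨hmem, by omega⟩
  · intro q hq
    rw [Finset.mem_filter] at hq ⊢
    obtain ⟨hqm, hlt⟩ := hq
    obtain ⟨hmem, hval, hbg, _⟩ := swapFun_props hqm
    exact ⟨hmem, by omega⟩
  · intro q hq
    rw [Finset.mem_filter] at hq
    exact (swapFun_props hq.1).2.2.2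
  · intro q hq
    rw [Finset.mem_filter] at hq
    exact (swapFun_props hq.1).2.2.2
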